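/- Let {F_m} be a sequence of functions with F_m ∈ Ω_m, F_0(x) = b_{0,0}⁰ ≠ 0, and F_m(x) = Σ_j b_{m,2j}⁰ x^{m-2j} + √(1-x²) Σ_j b_{m,2j}¹ x^{m-1-2j}, such that b_{m+1,0}⁰ b_{m,0}⁰ + b_{m+1,0}¹ b_{m,0}¹ ≠ 0 for all m ≥ 0 (with b_{0,0}¹ = 0). Then the set {F_{2m}(x), √(1-x²) F_{2m-1}(x), F_{2m-2}(x), ..., F_2(x), √(1-x²) F_1(x), F_0(x)} is a basis of Ω_{2m}. -/

import Mathlib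

/-!
An element of `Ω_n` is encoded by its coefficient pair `(B⁰, B¹)`, and the encoding is injective
because `B⁰` and `√(1 - x²) B¹` have opposite parities. In these coordinates the functions
`F_{2k}` and `√(1 - x²) F_{2k-1}` are triangular: passing from `Ω_{2k-2}` to `Ω_{2k}` adds exactly
the coefficients of `x^{2k}` in `B⁰` and of `x^{2k-1}` in `B¹`, and on these two coordinates the
pairs of `F_{2k}` and `√(1 - x²) F_{2k-1}` form a matrix of determinant
`b⁰_{2k,0} b⁰_{2k-1,0} + b¹_{2k,0} b¹_{2k-1,0} ≠ 0`. Induction on `k` (Cramer's rule) then gives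
spanning and linear independence at once.
-/

open Polynomial Real

/-- The space `Ω_m` of functions on `[-1,1]`, as a set of functions. -/
def OmegaSet (m : ℕ) : Set (Set.Icc (-1 : ℝ) 1 → ℝ) :=
  {f | ∃ B0 B1 : Polynomial ℝ,
    B0.degree ≤ (m : ℕ) ∧ B1.degree < (m : ℕ) ∧
    (∀ t : ℝ, B0.eval (-t) = (-1 : ℝ) ^ m * B0.eval t) ∧
    (∀ t : ℝ, B1.eval (-t) = (-1 : ℝ) ^ (m + 1) * B1.eval t) ∧
    ∀ t : Set.Icc (-1 : ℝ) 1,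
      f t = B0.eval (t : ℝ) + Real.sqrt (1 - (t : ℝ) ^ 2) * B1.eval (t : ℝ)}

open Set Submodule

lemma Polynomial.coeff_comp_neg_X {R : Type*} [CommRing R] (p : R[X]) (d : ℕ) :
    (p.comp (-X)).coeff d = (-1) ^ d * p.coeff d := by
  induction p using Polynomial.induction_on' with
  | add p q hp hq => rw [add_comp, coeff_add, coeff_add, hp, hq, mul_add]
  | monomial n a =>
    rw [monomial_comp, neg_pow, ← mul_assoc, ← C_1, ← C_neg, ← C_pow, ← C_mul,
      coeff_C_mul_X_pow, coeff_monomial]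
    rcases eq_or_ne d n with rfl | h
    · simp [mul_comm]
    · simp [h, Ne.symm h]

lemma Polynomial.coeff_one_sub_X_sq_mul {R : Type*} [CommRing R] (p : R[X]) (d : ℕ) :
    ((1 - X ^ 2) * p).coeff (d + 2) = p.coeff (d + 2) - p.coeff d := by
  rw [sub_mul, one_mul, coeff_sub, mul_comm, coeff_mul_X_pow]

lemma neg_one_pow_eq_neg_one_pow_iff (d k : ℕ) : (-1 : ℝ) ^ d = (-1) ^ k ↔ d % 2 = k % 2 := by
  rw [neg_one_pow_eq_pow_mod_two, neg_one_pow_eq_pow_mod_two (n := k)]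
  rcases Nat.mod_two_eq_zero_or_one d with hd | hd <;>
    rcases Nat.mod_two_eq_zero_or_one k with hk | hk <;> norm_num [hd, hk]

lemma Polynomial.eval_neg_eq_neg_one_pow_mul_iff (p : ℝ[X]) (k : ℕ) :
    (∀ t, p.eval (-t) = (-1) ^ k * p.eval t) ↔ ∀ d, d % 2 ≠ k % 2 → p.coeff d = 0 := by
  have hcomp : (∀ t, p.eval (-t) = (-1) ^ k * p.eval t) ↔ p.comp (-X) = C ((-1) ^ k) * p :=
    ⟨fun h => Polynomial.funext fun t => by simp [h],
      fun h t => by simpa using congrArg (eval t) h⟩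
  rw [hcomp, Polynomial.ext_iff]
  refine forall_congr' fun d => ?_
  rw [coeff_comp_neg_X, coeff_C_mul, ne_eq, ← neg_one_pow_eq_neg_one_pow_iff]
  refine ⟨fun h hne => (mul_left_inj' (sub_ne_zero.mpr hne)).mp (by linear_combination h),
    fun h => ?_⟩
  by_cases hdk : (-1 : ℝ) ^ d = (-1) ^ k
  · rw [hdk]
  · rw [h hdk, mul_zero, mul_zero]

noncomputable def Polynomial.coeffSupported (R : Type*) [Semiring R] (s : Set ℕ) :
    Submodule R R[X] where
  carrier := {p | ∀ d ∉ s, p.coeff d = 0}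
  add_mem' hp hq d hd := by rw [coeff_add, hp d hd, hq d hd, add_zero]
  zero_mem' d _ := coeff_zero d
  smul_mem' c p hp d hd := by rw [coeff_smul, hp d hd, smul_zero]

/-- The coefficient pairs `(B⁰, B¹)` of the elements of `Ω_n`. -/
noncomputable def omegaPairs (n : ℕ) : Submodule ℝ (ℝ[X] × ℝ[X]) :=
  (coeffSupported ℝ {d | d ≤ n ∧ d % 2 = n % 2}).prod
    (coeffSupported ℝ {d | d < n ∧ d % 2 ≠ n % 2})

lemma mem_omegaPairs {n : ℕ} {p : ℝ[X] × ℝ[X]} :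
    p ∈ omegaPairs n ↔ (∀ d, ¬(d ≤ n ∧ d % 2 = n % 2) → p.1.coeff d = 0) ∧
      (∀ d, ¬(d < n ∧ d % 2 ≠ n % 2) → p.2.coeff d = 0) :=
  Iff.rfl

noncomputable def evalPair : (ℝ[X] × ℝ[X]) →ₗ[ℝ] (Icc (-1 : ℝ) 1 → ℝ) where
  toFun p t := p.1.eval (t : ℝ) + √(1 - (t : ℝ) ^ 2) * p.2.eval (t : ℝ)
  map_add' p q := by
    ext t
    simp only [Prod.fst_add, Prod.snd_add, eval_add, Pi.add_apply]
    ring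
  map_smul' c p := by
    ext t
    simp only [Prod.smul_fst, Prod.smul_snd, eval_smul, smul_eq_mul, Pi.smul_apply,
      RingHom.id_apply]
    ring

lemma evalPair_apply (p : ℝ[X] × ℝ[X]) (t : Icc (-1 : ℝ) 1) :
    evalPair p t = p.1.eval (t : ℝ) + √(1 - (t : ℝ) ^ 2) * p.2.eval (t : ℝ) :=
  rfl

theorem omegaSet_eq_image_evalPair (n : ℕ) : OmegaSet n = evalPair '' omegaPairs n := by
  ext f
  constructor
  · rintro ⟨B0, B1, hdeg0, hdeg1, hpar0, hpar1, hf⟩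
    refine ⟨(B0, B1), mem_omegaPairs.2 ⟨fun d hd => ?_, fun d hd => ?_⟩,
      funext fun t => (hf t).symm⟩
    · by_cases h : d ≤ n
      · exact (eval_neg_eq_neg_one_pow_mul_iff B0 n).1 hpar0 d (by omega)
      · exact coeff_eq_zero_of_degree_lt (hdeg0.trans_lt (by exact_mod_cast not_le.1 h))
    · by_cases h : d < n
      · exact (eval_neg_eq_neg_one_pow_mul_iff B1 (n + 1)).1 hpar1 d (by omega)
      · exact coeff_eq_zero_of_degree_lt (hdeg1.trans_le (by exact_mod_cast not_lt.1 h))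
  · rintro ⟨⟨B0, B1⟩, hB, rfl⟩
    obtain ⟨h0, h1⟩ := mem_omegaPairs.1 hB
    refine ⟨B0, B1, degree_le_iff_coeff_zero _ _ |>.2 fun d hd => h0 d ?_,
      degree_lt_iff_coeff_zero _ _ |>.2 fun d hd => h1 d (by omega),
      (eval_neg_eq_neg_one_pow_mul_iff B0 n).2 fun d hd => h0 d (by omega),
      (eval_neg_eq_neg_one_pow_mul_iff B1 (n + 1)).2 fun d hd => h1 d (by omega),
      fun t => rfl⟩
    have : n < d := by exact_mod_cast hd
    omega

lemma sqrt_one_sub_sq_mul_self (t : Icc (-1 : ℝ) 1) :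
    √(1 - (t : ℝ) ^ 2) * √(1 - (t : ℝ) ^ 2) = 1 - (t : ℝ) ^ 2 :=
  Real.mul_self_sqrt (by nlinarith [t.2.1, t.2.2])

lemma eq_zero_of_mem_omegaPairs_of_evalPair_eq_zero {n : ℕ} {p : ℝ[X] × ℝ[X]}
    (hp : p ∈ omegaPairs n) (h : evalPair p = 0) : p = 0 := by
  obtain ⟨h0, h1⟩ := mem_omegaPairs.1 hp
  have hpar0 := (eval_neg_eq_neg_one_pow_mul_iff p.1 n).2 fun d hd => h0 d (by omega)
  have hpar1 := (eval_neg_eq_neg_one_pow_mul_iff p.2 (n + 1)).2 fun d hd => h1 d (by omega)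
  -- Comparing `t` with `-t` separates the two parts, as they have opposite parities.
  have hroots : ∀ t ∈ Ioo (-1 : ℝ) 1, p.1.eval t = 0 ∧ p.2.eval t = 0 := by
    intro t ht
    have hs : 0 < √(1 - t ^ 2) := Real.sqrt_pos.2 (by nlinarith [ht.1, ht.2])
    have hpos := congrFun h ⟨t, Ioo_subset_Icc_self ht⟩
    have hneg := congrFun h ⟨-t, by constructor <;> linarith [ht.1, ht.2]⟩
    simp only [evalPair_apply, Pi.zero_apply] at hpos hneg
    rw [hpar0, hpar1, neg_sq, pow_succ (-1 : ℝ) n] at hneg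
    have hdiff : p.1.eval t - √(1 - t ^ 2) * p.2.eval t = 0 :=
      (mul_eq_zero.1 (show (-1 : ℝ) ^ n * (p.1.eval t - √(1 - t ^ 2) * p.2.eval t) = 0 by
        linear_combination hneg)).resolve_left (pow_ne_zero n (by norm_num))
    refine ⟨by linear_combination (hpos + hdiff) / 2, ?_⟩
    exact (mul_eq_zero.1 (by linear_combination (hpos - hdiff) / 2)).resolve_left hs.ne'
  have hzero : ∀ q : ℝ[X], (∀ t ∈ Ioo (-1 : ℝ) 1, q.eval t = 0) → q = 0 := fun q hq =>
    eq_zero_of_infinite_isRoot q ((Ioo_infinite (by norm_num)).mono hq)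
  exact Prod.ext (hzero _ fun t ht => (hroots t ht).1) (hzero _ fun t ht => (hroots t ht).2)

lemma evalPair_injOn (n : ℕ) : InjOn evalPair (omegaPairs n) := fun p hp q hq h =>
  sub_eq_zero.1 <| eq_zero_of_mem_omegaPairs_of_evalPair_eq_zero (sub_mem hp hq)
    (by rw [map_sub, h, sub_self])

/-- Multiplication by `√(1 - x²)` on coefficient pairs. -/
noncomputable def mulSqrt (p : ℝ[X] × ℝ[X]) : ℝ[X] × ℝ[X] := ((1 - X ^ 2) * p.2, p.1)

lemma evalPair_mulSqrt (p : ℝ[X] × ℝ[X]) (t : Icc (-1 : ℝ) 1) :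
    evalPair (mulSqrt p) t = √(1 - (t : ℝ) ^ 2) * evalPair p t := by
  simp only [evalPair_apply, mulSqrt, eval_mul, eval_sub, eval_one, eval_pow, eval_X]
  linear_combination -p.2.eval (t : ℝ) * sqrt_one_sub_sq_mul_self t

lemma mulSqrt_mem_omegaPairs {n : ℕ} {p : ℝ[X] × ℝ[X]} (hp : p ∈ omegaPairs n) :
    mulSqrt p ∈ omegaPairs (n + 1) := by
  obtain ⟨h0, h1⟩ := mem_omegaPairs.1 hp
  refine mem_omegaPairs.2 ⟨fun d hd => ?_, fun d hd => h0 d (by omega)⟩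
  rcases d with _ | _ | d
  · simpa [mulSqrt] using h1 0 (by omega)
  · simpa [mulSqrt, sub_mul, coeff_X_pow_mul'] using h1 1 (by omega)
  · rw [mulSqrt, coeff_one_sub_X_sq_mul, h1 _ (by omega), h1 _ (by omega), sub_zero]

lemma omegaPairs_mono {n n' : ℕ} (h : n ≤ n') (hpar : n % 2 = n' % 2) :
    omegaPairs n ≤ omegaPairs n' := fun p hp =>
  mem_omegaPairs.2 ⟨fun d hd => (mem_omegaPairs.1 hp).1 d (by omega),
    fun d hd => (mem_omegaPairs.1 hp).2 d (by omega)⟩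

/-- The leading coefficients of an element of `omegaPairs (n + 2)` sit in degrees `n + 2` and
`n + 1`; this is the determinant of those of `u` and `v`. -/
def topDet (n : ℕ) (u v : ℝ[X] × ℝ[X]) : ℝ :=
  u.1.coeff (n + 2) * v.2.coeff (n + 1) - v.1.coeff (n + 2) * u.2.coeff (n + 1)

lemma coeff_eq_zero_of_mem_omegaPairs {n : ℕ} {p : ℝ[X] × ℝ[X]} (hp : p ∈ omegaPairs n) :
    p.1.coeff (n + 2) = 0 ∧ p.2.coeff (n + 1) = 0 :=
  ⟨(mem_omegaPairs.1 hp).1 _ (by omega), (mem_omegaPairs.1 hp).2 _ (by omega)⟩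

lemma mem_omegaPairs_iff_of_mem_add_two {n : ℕ} {p : ℝ[X] × ℝ[X]}
    (hp : p ∈ omegaPairs (n + 2)) :
    p ∈ omegaPairs n ↔ p.1.coeff (n + 2) = 0 ∧ p.2.coeff (n + 1) = 0 := by
  refine ⟨coeff_eq_zero_of_mem_omegaPairs, fun ⟨htop0, htop1⟩ => mem_omegaPairs.2 ⟨?_, ?_⟩⟩
  · intro d hd
    obtain rfl | hne := eq_or_ne d (n + 2)
    · exact htop0
    · exact (mem_omegaPairs.1 hp).1 d (by omega)
  · intro d hd
    obtain rfl | hne := eq_or_ne d (n + 1)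
    · exact htop1
    · exact (mem_omegaPairs.1 hp).2 d (by omega)

/-- Cramer's rule on the leading coefficients. -/
lemma omegaPairs_add_two_le {n : ℕ} {u v : ℝ[X] × ℝ[X]} (hu : u ∈ omegaPairs (n + 2))
    (hv : v ∈ omegaPairs (n + 2)) (hdet : topDet n u v ≠ 0) :
    omegaPairs (n + 2) ≤ ℝ ∙ u ⊔ (ℝ ∙ v ⊔ omegaPairs n) := by
  intro p hp
  set a := topDet n p v / topDet n u v
  set b := topDet n u p / topDet n u v
  have hcramer₁ : a * u.1.coeff (n + 2) + b * v.1.coeff (n + 2) = p.1.coeff (n + 2) := by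
    rw [div_mul_eq_mul_div, div_mul_eq_mul_div, ← add_div, div_eq_iff hdet]
    unfold topDet; ring
  have hcramer₂ : a * u.2.coeff (n + 1) + b * v.2.coeff (n + 1) = p.2.coeff (n + 1) := by
    rw [div_mul_eq_mul_div, div_mul_eq_mul_div, ← add_div, div_eq_iff hdet]
    unfold topDet; ring
  have hw : p - a • u - b • v ∈ omegaPairs n := by
    rw [mem_omegaPairs_iff_of_mem_add_two
      (sub_mem (sub_mem hp (smul_mem _ a hu)) (smul_mem _ b hv))]
    simp only [Prod.fst_sub, Prod.snd_sub, Prod.smul_fst, Prod.smul_snd, coeff_sub, coeff_smul,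
      smul_eq_mul]
    constructor <;> linarith
  have hp_eq : p = a • u + (b • v + (p - a • u - b • v)) := by abel
  rw [hp_eq]
  exact add_mem_sup (smul_mem _ a (mem_span_singleton_self u))
    (add_mem_sup (smul_mem _ b (mem_span_singleton_self v)) hw)

lemma notMem_omegaPairs_of_topDet_ne_zero {n : ℕ} {u v : ℝ[X] × ℝ[X]}
    (hdet : topDet n u v ≠ 0) : v ∉ omegaPairs n := by
  intro hv
  obtain ⟨hv0, hv1⟩ := coeff_eq_zero_of_mem_omegaPairs hv
  exact hdet (by rw [topDet, hv0, hv1]; ring)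

lemma notMem_sup_omegaPairs_of_topDet_ne_zero {n : ℕ} {u v : ℝ[X] × ℝ[X]}
    (hdet : topDet n u v ≠ 0) : u ∉ ℝ ∙ v ⊔ omegaPairs n := by
  intro hu
  obtain ⟨_, hcv, w, hw, rfl⟩ := mem_sup.1 hu
  obtain ⟨c, rfl⟩ := mem_span_singleton.1 hcv
  obtain ⟨hw0, hw1⟩ := coeff_eq_zero_of_mem_omegaPairs hw
  apply hdet
  simp only [topDet, Prod.fst_add, Prod.snd_add, Prod.smul_fst, Prod.smul_snd, coeff_add,
    coeff_smul, smul_eq_mul, hw0, hw1]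
  ring

lemma omegaPairs_zero_eq_span {u : ℝ[X] × ℝ[X]} (hu : u ∈ omegaPairs 0)
    (hlead : u.1.coeff 0 ≠ 0) : omegaPairs 0 = ℝ ∙ u := by
  refine le_antisymm (fun p hp => mem_span_singleton.2 ⟨p.1.coeff 0 / u.1.coeff 0, ?_⟩)
    (span_le.2 (singleton_subset_iff.2 hu))
  obtain ⟨hp₁, hp₂⟩ := mem_omegaPairs.1 hp
  obtain ⟨hu₁, hu₂⟩ := mem_omegaPairs.1 hu
  refine Prod.ext (Polynomial.ext fun d => ?_) (Polynomial.ext fun d => ?_)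
  · rcases d with _ | d
    · simp only [Prod.smul_fst, coeff_smul, smul_eq_mul]
      field_simp
    · simp [hp₁ (d + 1) (by omega), hu₁ (d + 1) (by omega)]
  · simp [hp₂ d (by omega), hu₂ d (by omega)]

lemma Nat.Iic_add_two (n : ℕ) : Iic (n + 2) = insert (n + 2) (insert (n + 1) (Iic n)) := by
  ext k
  simp only [mem_Iic, mem_insert_iff]
  omega

lemma span_image_Iic_add_two {R M : Type*} [Semiring R] [AddCommMonoid M] [Module R M]
    (q : ℕ → M) (n : ℕ) :
    span R (q '' Iic (n + 2)) = R ∙ q (n + 2) ⊔ (R ∙ q (n + 1) ⊔ span R (q '' Iic n)) := by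
  rw [Nat.Iic_add_two, image_insert_eq, image_insert_eq, span_insert, span_insert]

/-- The shape of both components of `F_k`. -/
noncomputable def parityPoly (k : ℕ) (c : ℕ → ℝ) : ℝ[X] :=
  ∑ j ∈ Finset.range (k / 2 + 1), monomial (k - 2 * j) (c j)

lemma eval_parityPoly (k : ℕ) (c : ℕ → ℝ) (t : ℝ) :
    (parityPoly k c).eval t = ∑ j ∈ Finset.range (k / 2 + 1), c j * t ^ (k - 2 * j) := by
  simp only [parityPoly, eval_finsetSum, eval_monomial]

lemma coeff_parityPoly (k : ℕ) (c : ℕ → ℝ) (d : ℕ) :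
    (parityPoly k c).coeff d = if d ≤ k ∧ d % 2 = k % 2 then c ((k - d) / 2) else 0 := by
  simp only [parityPoly, finsetSum_coeff, coeff_monomial]
  split_ifs with h
  · rw [Finset.sum_eq_single ((k - d) / 2)]
    · rw [if_pos (by omega)]
    · intro j hj hne
      simp only [Finset.mem_range] at hj
      rw [if_neg (by omega)]
    · intro hj
      simp only [Finset.mem_range] at hj
      omega
  · refine Finset.sum_eq_zero fun j hj => if_neg ?_
    simp only [Finset.mem_range] at hj
    omega

/-- The coefficient pair `(B⁰, B¹)` of `F_k`. -/
noncomputable def seqPair (b0 b1 : ℕ → ℕ → ℝ) (k : ℕ) : ℝ[X] × ℝ[X] :=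
  (parityPoly k fun j => b0 k (2 * j), parityPoly (k - 1) fun j => b1 k (2 * j))

noncomputable def basisPair (b0 b1 : ℕ → ℕ → ℝ) (k : ℕ) : ℝ[X] × ℝ[X] :=
  if Even k then seqPair b0 b1 k else mulSqrt (seqPair b0 b1 k)

section Sequence

variable {b0 b1 : ℕ → ℕ → ℝ}

lemma evalPair_seqPair (k : ℕ) (t : Icc (-1 : ℝ) 1) :
    evalPair (seqPair b0 b1 k) t =
      (∑ j ∈ Finset.range (k / 2 + 1), b0 k (2 * j) * (t : ℝ) ^ (k - 2 * j)) +
        √(1 - (t : ℝ) ^ 2) *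
          ∑ j ∈ Finset.range ((k - 1) / 2 + 1), b1 k (2 * j) * (t : ℝ) ^ (k - 1 - 2 * j) := by
  simp only [evalPair_apply, seqPair, eval_parityPoly]

lemma seqPair_fst_coeff_self (k : ℕ) : (seqPair b0 b1 k).1.coeff k = b0 k 0 := by
  simp [seqPair, coeff_parityPoly]

lemma seqPair_snd_coeff_self (k : ℕ) : (seqPair b0 b1 (k + 1)).2.coeff k = b1 (k + 1) 0 := by
  simp [seqPair, coeff_parityPoly]

lemma seqPair_mem_omegaPairs (hb100 : b1 0 0 = 0) (k : ℕ) : seqPair b0 b1 k ∈ omegaPairs k := by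
  refine mem_omegaPairs.2
    ⟨fun d hd => by rw [seqPair, coeff_parityPoly, if_neg hd], fun d hd => ?_⟩
  rw [seqPair, coeff_parityPoly]
  split_ifs with h
  · -- For `k = 0` the truncated `k - 1` lets the constant `b1 0 0` into `B¹`.
    obtain ⟨rfl, rfl⟩ : k = 0 ∧ d = 0 := by omega
    simpa using hb100
  · rfl

lemma evalPair_basisPair (k : ℕ) (t : Icc (-1 : ℝ) 1) :
    evalPair (basisPair b0 b1 k) t =
      (if Even k then 1 else √(1 - (t : ℝ) ^ 2)) * evalPair (seqPair b0 b1 k) t := by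
  unfold basisPair
  split_ifs
  · rw [one_mul]
  · exact evalPair_mulSqrt _ t

lemma basisPair_mem_omegaPairs (hb100 : b1 0 0 = 0) {k n : ℕ} (hk : k ≤ n) (hn : Even n) :
    basisPair b0 b1 k ∈ omegaPairs n := by
  have := Nat.even_iff.1 hn
  unfold basisPair
  split_ifs with hev
  · have := Nat.even_iff.1 hev
    exact omegaPairs_mono hk (by omega) (seqPair_mem_omegaPairs hb100 k)
  · have := Nat.odd_iff.1 (Nat.not_even_iff_odd.1 hev)
    exact omegaPairs_mono (by omega) (by omega)
      (mulSqrt_mem_omegaPairs (seqPair_mem_omegaPairs hb100 k))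

lemma topDet_basisPair_ne_zero
    (hlead : ∀ k : ℕ, b0 (k + 1) 0 * b0 k 0 + b1 (k + 1) 0 * b1 k 0 ≠ 0) (M : ℕ) :
    topDet (2 * M) (basisPair b0 b1 (2 * M + 2)) (basisPair b0 b1 (2 * M + 1)) ≠ 0 := by
  have hsnd : (seqPair b0 b1 (2 * M + 1)).2.coeff (2 * M + 2) = 0 := by
    rw [seqPair, coeff_parityPoly, if_neg (by omega)]
  rw [topDet, basisPair, basisPair, if_pos ⟨M + 1, by ring⟩,
    if_neg (Nat.not_even_two_mul_add_one M)]
  simp only [mulSqrt, coeff_one_sub_X_sq_mul, hsnd]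
  rw [seqPair_fst_coeff_self, seqPair_fst_coeff_self, seqPair_snd_coeff_self,
    seqPair_snd_coeff_self]
  convert hlead (2 * M + 1) using 1
  ring

lemma basisPair_zero_fst_coeff_zero : (basisPair b0 b1 0).1.coeff 0 = b0 0 0 := by
  rw [basisPair, if_pos Even.zero, seqPair_fst_coeff_self]

lemma Nat.Iic_zero : Iic (0 : ℕ) = {0} := by
  ext k
  simp only [mem_Iic, mem_singleton_iff, Nat.le_zero]

theorem span_basisPair_image_Iic (hb100 : b1 0 0 = 0) (h000 : b0 0 0 ≠ 0)
    (hlead : ∀ k : ℕ, b0 (k + 1) 0 * b0 k 0 + b1 (k + 1) 0 * b1 k 0 ≠ 0) (M : ℕ) :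
    span ℝ (basisPair b0 b1 '' Iic (2 * M)) = omegaPairs (2 * M) := by
  induction M with
  | zero =>
    rw [mul_zero, Nat.Iic_zero, image_singleton]
    refine (omegaPairs_zero_eq_span (basisPair_mem_omegaPairs hb100 le_rfl Even.zero) ?_).symm
    rwa [basisPair_zero_fst_coeff_zero]
  | succ M ih =>
    have hu : basisPair b0 b1 (2 * M + 2) ∈ omegaPairs (2 * M + 2) :=
      basisPair_mem_omegaPairs hb100 (by omega) ⟨M + 1, by ring⟩
    have hv : basisPair b0 b1 (2 * M + 1) ∈ omegaPairs (2 * M + 2) :=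
      basisPair_mem_omegaPairs hb100 (by omega) ⟨M + 1, by ring⟩
    rw [mul_add, mul_one, span_image_Iic_add_two, ih]
    exact le_antisymm
      (sup_le (span_le.2 (singleton_subset_iff.2 hu))
        (sup_le (span_le.2 (singleton_subset_iff.2 hv)) (omegaPairs_mono (by omega) (by omega))))
      (omegaPairs_add_two_le hu hv (topDet_basisPair_ne_zero hlead M))

theorem linearIndepOn_basisPair_Iic (hb100 : b1 0 0 = 0) (h000 : b0 0 0 ≠ 0)
    (hlead : ∀ k : ℕ, b0 (k + 1) 0 * b0 k 0 + b1 (k + 1) 0 * b1 k 0 ≠ 0) (M : ℕ) :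
    LinearIndepOn ℝ (basisPair b0 b1) (Iic (2 * M)) := by
  induction M with
  | zero =>
    rw [mul_zero, Nat.Iic_zero, linearIndepOn_singleton_iff]
    intro h
    apply h000
    rw [← basisPair_zero_fst_coeff_zero (b0 := b0) (b1 := b1), h, Prod.fst_zero, coeff_zero]
  | succ M ih =>
    have hdet := topDet_basisPair_ne_zero hlead M
    rw [mul_add, mul_one, Nat.Iic_add_two, linearIndepOn_insert (by simp),
      linearIndepOn_insert (by simp), image_insert_eq, span_insert,
      span_basisPair_image_Iic hb100 h000 hlead]
    exact ⟨⟨ih, notMem_omegaPairs_of_topDet_ne_zero hdet⟩,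
      notMem_sup_omegaPairs_of_topDet_ne_zero hdet⟩

end Sequence

lemma range_sub_fin_eq_Iic (n : ℕ) : range (fun k : Fin (n + 1) => n - (k : ℕ)) = Iic n := by
  ext j
  refine ⟨fun ⟨k, hk⟩ => hk ▸ Nat.sub_le n k, fun hj => ⟨⟨n - j, by omega⟩, ?_⟩⟩
  show n - (n - j) = j
  simp only [mem_Iic] at hj
  omega

/-- If `F_m ∈ Ω_m` with `F_m(x) = Σ_j b⁰_{m,2j} x^{m-2j} +
√(1-x²) Σ_j b¹_{m,2j} x^{m-1-2j}`, and
`b⁰_{m+1,0} b⁰_{m,0} + b¹_{m+1,0} b¹_{m,0} ≠ 0` for all `m ≥ 0`, then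
`{F_{2m}, √(1-x²) F_{2m-1}, F_{2m-2}, …, F_2, √(1-x²) F_1, F_0}` is a basis of `Ω_{2m}`. -/
theorem stmt_10 (m : ℕ) (b0 b1 : ℕ → ℕ → ℝ) (F : ℕ → (Set.Icc (-1 : ℝ) 1 → ℝ))
    (hb100 : b1 0 0 = 0)
    (hF : ∀ k : ℕ, ∀ t : Set.Icc (-1 : ℝ) 1,
      F k t = (∑ j ∈ Finset.range (k / 2 + 1), b0 k (2 * j) * (t : ℝ) ^ (k - 2 * j)) +
        Real.sqrt (1 - (t : ℝ) ^ 2) *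
          ∑ j ∈ Finset.range ((k - 1) / 2 + 1), b1 k (2 * j) * (t : ℝ) ^ (k - 1 - 2 * j))
    (hlead : ∀ k : ℕ, b0 (k + 1) 0 * b0 k 0 + b1 (k + 1) 0 * b1 k 0 ≠ 0)
    (g : Fin (2 * m + 1) → (Set.Icc (-1 : ℝ) 1 → ℝ))
    (hg : ∀ k : Fin (2 * m + 1), ∀ t : Set.Icc (-1 : ℝ) 1,
      g k t = (if Even (k : ℕ) then 1 else Real.sqrt (1 - (t : ℝ) ^ 2)) *
        F (2 * m - (k : ℕ)) t) :
    LinearIndependent ℝ g ∧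
      (Submodule.span ℝ (Set.range g) : Set (Set.Icc (-1 : ℝ) 1 → ℝ)) = OmegaSet (2 * m) := by
  have h000 : b0 0 0 ≠ 0 := fun h => hlead 0 (by rw [h, hb100]; ring)
  have hg_eq :
      g = (evalPair ∘ basisPair b0 b1) ∘ fun k : Fin (2 * m + 1) => 2 * m - (k : ℕ) := by
    funext k t
    have hk : (k : ℕ) ≤ 2 * m := Nat.lt_succ_iff.1 k.isLt
    rw [hg, hF, ← evalPair_seqPair, Function.comp_apply, Function.comp_apply, evalPair_basisPair]
    simp only [Nat.even_sub hk, even_two_mul, true_iff]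
  have hspan := span_basisPair_image_Iic hb100 h000 hlead m
  refine ⟨?_, ?_⟩
  · rw [hg_eq, ← linearIndepOn_univ_iff]
    refine LinearIndepOn.comp_of_image ?_ fun a _ b _ hab => Fin.ext ?_
    · rw [image_univ, range_sub_fin_eq_Iic]
      exact (linearIndepOn_basisPair_Iic hb100 h000 hlead m).map_injOn evalPair
        (hspan ▸ evalPair_injOn (2 * m))
    · have := Nat.lt_succ_iff.1 a.isLt
      have := Nat.lt_succ_iff.1 b.isLt
      omega
  · rw [hg_eq, range_comp, image_comp, range_sub_fin_eq_Iic, span_image, hspan, map_coe,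
      omegaSet_eq_image_evalPair]
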